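/- Let p(x,y) and r(x,y) be joint pmfs on a product of finite alphabets with r positive on the support of p, and q ≠ 1. Then D_q(p(x,y) || r(x,y)) = D_q(p(x) || r(x)) + D_q(p(y|x) || r(y|x)) + (1-q)·∑_{x,y} p(x,y) ln_q(p(x)/r(x)) ln_q(p(y|x)/r(y|x)), where D_q(p(y|x)||r(y|x)) = ∑_{x,y} p(x,y) ln_q(p(y|x)/r(y|x)). -/
import Mathlib


noncomputable def lnq (q t : ℝ) : ℝ := (t ^ (1 - q) - 1) / (1 - q)

lemma lnq_mul (q a b : ℝ) (hq : (1:ℝ) - q ≠ 0) (ha : 0 ≤ a) (hb : 0 ≤ b) :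
    lnq q (a * b) = lnq q a + lnq q b + (1 - q) * lnq q a * lnq q b := by
  unfold lnq
  rw [Real.mul_rpow ha hb]
  field_simp
  ring

theorem relative_q_entropy_chain_rule {α β : Type*} [Fintype α] [Fintype β]
    (q : ℝ) (hq1 : q ≠ 1)
    (p r : α → β → ℝ)
    (hp0 : ∀ x y, 0 ≤ p x y) (hp1 : ∑ x, ∑ y, p x y = 1)
    (hr0 : ∀ x y, 0 ≤ r x y) (hr1 : ∑ x, ∑ y, r x y = 1)
    (hpr : ∀ x y, 0 < p x y → 0 < r x y) :
    (∑ x, ∑ y, (if p x y = 0 then 0 else p x y * lnq q (p x y / r x y))) =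
      (∑ x, (if (∑ y, p x y) = 0 then 0 else
        (∑ y, p x y) * lnq q ((∑ y, p x y) / (∑ y, r x y)))) +
      (∑ x, ∑ y, (if p x y = 0 then 0 else
        p x y * lnq q ((p x y / ∑ y', p x y') / (r x y / ∑ y', r x y')))) +
      (1 - q) * ∑ x, ∑ y, (if p x y = 0 then 0 else
        p x y * lnq q ((∑ y', p x y') / (∑ y', r x y')) *
          lnq q ((p x y / ∑ y', p x y') / (r x y / ∑ y', r x y'))) := by
  have hs : (1:ℝ) - q ≠ 0 := sub_ne_zero.mpr (Ne.symm hq1)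
  simp only [Finset.mul_sum]
  rw [← Finset.sum_add_distrib, ← Finset.sum_add_distrib]
  apply Finset.sum_congr rfl
  intro x _
  have hT1 : (if (∑ y, p x y) = 0 then 0 else
      (∑ y, p x y) * lnq q ((∑ y, p x y) / (∑ y, r x y))) =
      ∑ y, (if p x y = 0 then 0 else
        p x y * lnq q ((∑ y', p x y') / (∑ y', r x y'))) := by
    by_cases h : (∑ y, p x y) = 0
    · have hz : ∀ y, p x y = 0 := by
        intro y
        have := (Finset.sum_eq_zero_iff_of_nonneg (fun y _ => hp0 x y)).mp h
        exact this y (Finset.mem_univ y)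
      simp [h, hz]
    · rw [if_neg h, Finset.sum_mul]
      apply Finset.sum_congr rfl
      intro y _
      by_cases hy : p x y = 0 <;> simp [hy]
  rw [hT1, ← Finset.sum_add_distrib, ← Finset.sum_add_distrib]
  apply Finset.sum_congr rfl
  intro y _
  by_cases hy : p x y = 0
  · simp [hy]
  · simp only [if_neg hy]
    have hpxy : 0 < p x y := lt_of_le_of_ne (hp0 x y) (Ne.symm hy)
    have hrxy : 0 < r x y := hpr x y hpxy
    have hpX : 0 < ∑ y', p x y' :=
      lt_of_lt_of_le hpxy (Finset.single_le_sum (fun y' _ => hp0 x y') (Finset.mem_univ y))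
    have hrX : 0 < ∑ y', r x y' :=
      lt_of_lt_of_le hrxy (Finset.single_le_sum (fun y' _ => hr0 x y') (Finset.mem_univ y))
    have hprod : p x y / r x y =
        ((∑ y', p x y') / (∑ y', r x y')) * ((p x y / ∑ y', p x y') / (r x y / ∑ y', r x y')) := by
      field_simp
    rw [hprod, lnq_mul q _ _ hs
      (div_nonneg hpX.le hrX.le)
      (div_nonneg (div_nonneg hpxy.le hpX.le) (div_nonneg hrxy.le hrX.le))]
    ring
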